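/- arXiv:1906.09659 — 2 statements merged into one kernel-verified Lean document; each statement's English description precedes it below -/
import Mathlib

section
/- Let k be an integer with k > 1 and π a permutation of {1,...,k}. There exists a constant C = C(π) such that for all positive integers m, n with m ≤ C(n,k) (binomial coefficient), the number of permutations σ of {1,...,n} containing at most m copies of π is at least exp(−Cn)·max(1, (m/n)^(n/(k-1))). (That is, the upper bound of Theorem 2.3 is sharp to within an exponential factor.) -/
/-- The number of copies of the `k`-permutation `π` in the `n`-permutation `σ`:
strictly increasing index tuples `x : Fin k → Fin n` such that the entries of
`σ` at these indices are ordered according to `π`. -/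
noncomputable def permCopies {k n : ℕ} (π : Equiv.Perm (Fin k))
    (σ : Equiv.Perm (Fin n)) : ℕ :=
  Nat.card {x : Fin k → Fin n //
    StrictMono x ∧ ∀ i j, π i < π j ↔ σ (x i) < σ (x j)}

section Aux

/-! ### Sum-decomposability -/

/-- `π` is decomposable as a direct sum at some cut `a`. -/
def SumDecomp {k : ℕ} (π : Equiv.Perm (Fin k)) : Prop :=
  ∃ a : ℕ, 0 < a ∧ a < k ∧ ∀ i j : Fin k, i.val < a → a ≤ j.val → π i < π j

lemma not_sumDecomp_or {k : ℕ} (hk : 1 < k) (π : Equiv.Perm (Fin k)) :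
    ¬SumDecomp π ∨ ¬SumDecomp (π.trans Fin.revPerm) := by
  by_contra h
  push_neg at h
  obtain ⟨h1, h2⟩ := h
  obtain ⟨a, ha0, hak, ha⟩ := h1
  obtain ⟨b, hb0, hbk, hb⟩ := h2
  have h0k : 0 < k := by omega
  set i0 : Fin k := ⟨0, h0k⟩
  set j0 : Fin k := ⟨k - 1, by omega⟩
  have t1 : π i0 < π j0 := ha i0 j0 ha0 (by simp [j0]; omega)
  have t2 : (π.trans Fin.revPerm) i0 < (π.trans Fin.revPerm) j0 :=
    hb i0 j0 hb0 (by simp [j0]; omega)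
  simp only [Equiv.trans_apply, Fin.revPerm_apply, Fin.rev_lt_rev] at t2
  exact absurd t1 (not_lt.mpr t2.le)

lemma permCopies_rev {k n : ℕ} (π : Equiv.Perm (Fin k)) (σ : Equiv.Perm (Fin n)) :
    permCopies (π.trans Fin.revPerm) (σ.trans Fin.revPerm) = permCopies π σ := by
  unfold permCopies
  apply Nat.card_congr
  apply Equiv.subtypeEquivRight
  intro x
  constructor
  · rintro ⟨hm, hp⟩
    refine ⟨hm, fun i j => ?_⟩
    have := hp j i
    simp only [Equiv.trans_apply, Fin.revPerm_apply, Fin.rev_lt_rev] at this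
    exact this
  · rintro ⟨hm, hp⟩
    refine ⟨hm, fun i j => ?_⟩
    simp only [Equiv.trans_apply, Fin.revPerm_apply, Fin.rev_lt_rev]
    exact hp j i

/-! ### Division/mod helpers -/

lemma blockDivHelper {t : ℕ} (ht : 0 < t) (a : ℕ) {w : ℕ} (hw : w < t) :
    (a * t + w) / t = a := by
  rw [Nat.mul_comm, Nat.mul_add_div ht, Nat.div_eq_of_lt hw, Nat.add_zero]

lemma blockModHelper {t : ℕ} (a : ℕ) {w : ℕ} (hw : w < t) : (a * t + w) % t = w := by
  rw [Nat.mul_comm, Nat.mul_add_mod, Nat.mod_eq_of_lt hw]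

/-! ### The block-diagonal permutations -/

section Block
variable {n t : ℕ}

lemma rem_lt (ht : 0 < t) (u : Fin n) (h : ¬ u.val / t < n / t) : u.val % t < n % t := by
  have h1 := Nat.div_add_mod u.val t
  have h2 := Nat.div_add_mod n t
  have h3 : n / t ≤ u.val / t := le_of_not_gt h
  have h4 : t * (n / t) ≤ t * (u.val / t) := Nat.mul_le_mul_left t h3
  have h5 : u.val < n := u.isLt
  omega

/-- The block-diagonal function on `Fin n` with blocks of size `t` (blocks are fibers of
`(·.val / t)`), acting within block `a < n/t` by `f a`, and on the remainder block by `g`. -/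
def blockFun (ht : 0 < t) (f : Fin (n / t) → Equiv.Perm (Fin t))
    (g : Equiv.Perm (Fin (n % t))) : Fin n → Fin n := fun u =>
  if h : u.val / t < n / t then
    ⟨u.val / t * t + (f ⟨u.val / t, h⟩ ⟨u.val % t, Nat.mod_lt _ ht⟩).val, by
      have h1 := (f ⟨u.val / t, h⟩ ⟨u.val % t, Nat.mod_lt _ ht⟩).isLt
      have h2 : (u.val / t + 1) * t ≤ (n / t) * t := Nat.mul_le_mul_right t h
      have h3 : (n / t) * t ≤ n := Nat.div_mul_le_self n t
      nlinarith⟩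
  else
    ⟨u.val / t * t + (g ⟨u.val % t, rem_lt ht u h⟩).val, by
      have heq : u.val / t = n / t :=
        le_antisymm (Nat.div_le_div_right u.isLt.le) (le_of_not_gt h)
      have h1 := (g ⟨u.val % t, rem_lt ht u h⟩).isLt
      have h2 := Nat.div_add_mod n t
      have h3 : u.val / t * t = t * (n / t) := by rw [heq, Nat.mul_comm]
      omega⟩

lemma blockFun_div (ht : 0 < t) (f : Fin (n / t) → Equiv.Perm (Fin t))
    (g : Equiv.Perm (Fin (n % t))) (u : Fin n) :
    (blockFun ht f g u).val / t = u.val / t := by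
  unfold blockFun
  split
  · next h => exact blockDivHelper ht _ (f ⟨u.val / t, h⟩ ⟨u.val % t, Nat.mod_lt _ ht⟩).isLt
  · next h =>
      exact blockDivHelper ht _ ((g ⟨u.val % t, rem_lt ht u h⟩).isLt.trans (Nat.mod_lt n ht))

lemma blockFun_mod_f (ht : 0 < t) (f : Fin (n / t) → Equiv.Perm (Fin t))
    (g : Equiv.Perm (Fin (n % t))) (u : Fin n) (h : u.val / t < n / t) :
    (blockFun ht f g u).val % t = (f ⟨u.val / t, h⟩ ⟨u.val % t, Nat.mod_lt _ ht⟩).val := by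
  unfold blockFun
  rw [dif_pos h]
  exact blockModHelper _ (Fin.isLt _)

lemma blockFun_mod_g (ht : 0 < t) (f : Fin (n / t) → Equiv.Perm (Fin t))
    (g : Equiv.Perm (Fin (n % t))) (u : Fin n) (h : ¬ u.val / t < n / t) :
    (blockFun ht f g u).val % t = (g ⟨u.val % t, rem_lt ht u h⟩).val := by
  unfold blockFun
  rw [dif_neg h]
  exact blockModHelper _ ((g ⟨u.val % t, rem_lt ht u h⟩).isLt.trans (Nat.mod_lt n ht))

lemma blockFun_injective (ht : 0 < t) (f : Fin (n / t) → Equiv.Perm (Fin t))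
    (g : Equiv.Perm (Fin (n % t))) : Function.Injective (blockFun ht f g) := by
  intro u v huv
  have hdiv : u.val / t = v.val / t := by
    have h1 := blockFun_div ht f g u
    have h2 := blockFun_div ht f g v
    rw [huv] at h1
    omega
  have hdm_u := Nat.div_add_mod u.val t
  have hdm_v := Nat.div_add_mod v.val t
  have hmod : u.val % t = v.val % t := by
    by_cases h : u.val / t < n / t
    · have h' : v.val / t < n / t := by omega
      have e1 := blockFun_mod_f ht f g u h
      have e2 := blockFun_mod_f ht f g v h'
      rw [huv] at e1
      rw [e2] at e1
      have hb : (⟨v.val / t, h'⟩ : Fin (n / t)) = ⟨u.val / t, h⟩ := Fin.ext hdiv.symm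
      rw [hb] at e1
      have := (f ⟨u.val / t, h⟩).injective (Fin.val_injective e1)
      exact congrArg Fin.val this.symm
    · have h' : ¬ v.val / t < n / t := by omega
      have e1 := blockFun_mod_g ht f g u h
      have e2 := blockFun_mod_g ht f g v h'
      rw [huv] at e1
      rw [e2] at e1
      have := g.injective (Fin.val_injective e1)
      exact congrArg Fin.val this.symm
  exact Fin.ext (by rw [← hdm_u, ← hdm_v, hdiv, hmod])

/-- The block-diagonal permutation. -/
noncomputable def blockPerm (ht : 0 < t) (f : Fin (n / t) → Equiv.Perm (Fin t))
    (g : Equiv.Perm (Fin (n % t))) : Equiv.Perm (Fin n) :=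
  Equiv.ofBijective _ (Finite.injective_iff_bijective.mp (blockFun_injective ht f g))

lemma blockPerm_div (ht : 0 < t) (f : Fin (n / t) → Equiv.Perm (Fin t))
    (g : Equiv.Perm (Fin (n % t))) (u : Fin n) :
    ((blockPerm ht f g) u).val / t = u.val / t := blockFun_div ht f g u

lemma blockPerm_injective (ht : 0 < t) :
    Function.Injective (fun p : (Fin (n / t) → Equiv.Perm (Fin t)) × Equiv.Perm (Fin (n % t)) =>
      blockPerm ht p.1 p.2) := by
  intro p q hpq
  have hfun : ∀ u : Fin n, blockFun ht p.1 p.2 u = blockFun ht q.1 q.2 u := by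
    intro u
    exact Equiv.ext_iff.mp hpq u
  obtain ⟨f1, g1⟩ := p
  obtain ⟨f2, g2⟩ := q
  simp only [Prod.mk.injEq]
  constructor
  · funext a
    apply Equiv.ext
    intro b
    have hlt : a.val * t + b.val < n := by
      have h1 : a.val * t + b.val < (a.val + 1) * t := by nlinarith [b.isLt]
      have h2 : (a.val + 1) * t ≤ (n / t) * t := Nat.mul_le_mul_right t a.isLt
      have h3 : (n / t) * t ≤ n := Nat.div_mul_le_self n t
      omega
    set u : Fin n := ⟨a.val * t + b.val, hlt⟩ with hu
    have hdiv : u.val / t = a.val := blockDivHelper ht a.val b.isLt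
    have hmod : u.val % t = b.val := blockModHelper a.val b.isLt
    have hblk : u.val / t < n / t := by rw [hdiv]; exact a.isLt
    have e1 := blockFun_mod_f ht f1 g1 u hblk
    have e2 := blockFun_mod_f ht f2 g2 u hblk
    rw [hfun u] at e1
    rw [e2] at e1
    have ha : (⟨u.val / t, hblk⟩ : Fin (n / t)) = a := Fin.ext hdiv
    have hb : (⟨u.val % t, Nat.mod_lt _ ht⟩ : Fin t) = b := Fin.ext hmod
    rw [ha, hb] at e1
    exact Fin.val_injective e1.symm
  · apply Equiv.ext
    intro b
    have hlt : (n / t) * t + b.val < n := by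
      have h2 := Nat.div_add_mod n t
      have h3 : (n / t) * t = t * (n / t) := Nat.mul_comm _ _
      have := b.isLt
      omega
    set u : Fin n := ⟨(n / t) * t + b.val, hlt⟩ with hu
    have hbt : b.val < t := b.isLt.trans (Nat.mod_lt n ht)
    have hdiv : u.val / t = n / t := blockDivHelper ht (n / t) hbt
    have hmod : u.val % t = b.val := blockModHelper (n / t) hbt
    have hblk : ¬ u.val / t < n / t := by rw [hdiv]; exact lt_irrefl _
    have e1 := blockFun_mod_g ht f1 g1 u hblk
    have e2 := blockFun_mod_g ht f2 g2 u hblk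
    rw [hfun u] at e1
    rw [e2] at e1
    have hb : (⟨u.val % t, rem_lt ht u hblk⟩ : Fin (n % t)) = b := Fin.ext hmod
    rw [hb] at e1
    exact Fin.val_injective e1.symm

/-- Lower bound for the number of permutations satisfying a block-stable property. -/
lemma card_lower (ht : 0 < t) (P : Equiv.Perm (Fin n) → Prop)
    (hP : ∀ σ : Equiv.Perm (Fin n), (∀ u : Fin n, (σ u).val / t = u.val / t) → P σ) :
    t.factorial ^ (n / t) * (n % t).factorial ≤ Nat.card {σ : Equiv.Perm (Fin n) // P σ} := by
  have hinj : Function.Injective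
      (fun p : (Fin (n / t) → Equiv.Perm (Fin t)) × Equiv.Perm (Fin (n % t)) =>
        (⟨blockPerm ht p.1 p.2, hP _ (blockPerm_div ht p.1 p.2)⟩ :
          {σ : Equiv.Perm (Fin n) // P σ})) := by
    intro p q hpq
    apply blockPerm_injective ht
    exact congrArg Subtype.val hpq
  have hcard := Nat.card_le_card_of_injective _ hinj
  calc t.factorial ^ (n / t) * (n % t).factorial
      = Nat.card ((Fin (n / t) → Equiv.Perm (Fin t)) × Equiv.Perm (Fin (n % t))) := by
        simp [Nat.card_prod, Nat.card_fun, Nat.card_eq_fintype_card, Fintype.card_perm,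
          Fintype.card_fin]
    _ ≤ _ := hcard

end Block

lemma copies_le {k n t : ℕ} (ht : 0 < t) (hk : 0 < k) (π : Equiv.Perm (Fin k))
    (hπ : ¬SumDecomp π) (σ : Equiv.Perm (Fin n))
    (hσ : ∀ u : Fin n, (σ u).val / t = u.val / t) :
    permCopies π σ ≤ (n / t + 1) * Nat.card {o : Fin k → Fin t // StrictMono o} := by
  classical
  set i0 : Fin k := ⟨0, hk⟩ with hi0
  -- every copy lies in a single block
  have hblock : ∀ (x : Fin k → Fin n), StrictMono x →
      (∀ i j, π i < π j ↔ σ (x i) < σ (x j)) →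
      ∀ i, (x i).val / t = (x i0).val / t := by
    intro x hmono hpat
    by_contra hc
    push_neg at hc
    obtain ⟨iw, hiw⟩ := hc
    set F : Finset (Fin k) :=
      Finset.univ.filter (fun j => (x j).val / t ≠ (x i0).val / t) with hF
    have hne : F.Nonempty := ⟨iw, by simp [hF, hiw]⟩
    set j₀ : Fin k := F.min' hne with hj₀def
    have hj₀ : (x j₀).val / t ≠ (x i0).val / t := by
      have := F.min'_mem hne
      simp [hF] at this
      exact this
    apply hπ
    refine ⟨j₀.val, ?_, j₀.isLt, ?_⟩
    · rcases Nat.eq_zero_or_pos j₀.val with h | h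
      · exact absurd (congrArg (fun u => (x u).val / t) (Fin.ext h : j₀ = i0)) hj₀
      · exact h
    · intro i j hi hj
      have hiF : i ∉ F := by
        intro hmem
        exact absurd (Fin.le_def.mp (F.min'_le i hmem)) (by omega)
      have hxi : (x i).val / t = (x i0).val / t := by
        simpa [hF] using hiF
      have h0j : (x i0).val / t ≤ (x j₀).val / t :=
        Nat.div_le_div_right (Fin.le_def.mp (hmono.monotone (Fin.le_def.mpr (Nat.zero_le _))))
      have hj₀j : (x j₀).val / t ≤ (x j).val / t :=
        Nat.div_le_div_right (Fin.le_def.mp (hmono.monotone (Fin.le_def.mpr hj)))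
      have hdivlt : (x i).val / t < (x j).val / t := by
        rcases lt_or_eq_of_le h0j with h | h
        · omega
        · exact absurd h.symm hj₀
      have hσlt : (σ (x i)).val / t < (σ (x j)).val / t := by
        rw [hσ (x i), hσ (x j)]; exact hdivlt
      exact (hpat i j).mpr (Fin.lt_def.mpr (Nat.lt_of_div_lt_div hσlt))
  unfold permCopies
  have hmonoOff : ∀ p : {x : Fin k → Fin n //
      StrictMono x ∧ ∀ i j, π i < π j ↔ σ (x i) < σ (x j)},
      StrictMono (fun i => (⟨(p.val i).val % t, Nat.mod_lt _ ht⟩ : Fin t)) := by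
    intro p i j hij
    have h1 : (p.val i) < (p.val j) := p.prop.1 hij
    have h2 : (p.val i).val / t = (p.val j).val / t := by
      rw [hblock p.val p.prop.1 p.prop.2 i, hblock p.val p.prop.1 p.prop.2 j]
    have hdmx := Nat.div_add_mod (p.val i).val t
    have hdmy := Nat.div_add_mod (p.val j).val t
    have h3 : t * ((p.val i).val / t) = t * ((p.val j).val / t) := by rw [h2]
    have h4 : (p.val i).val < (p.val j).val := Fin.lt_def.mp h1
    simp only [Fin.lt_def]
    omega
  have key : Nat.card {x : Fin k → Fin n //
      StrictMono x ∧ ∀ i j, π i < π j ↔ σ (x i) < σ (x j)} ≤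
      Nat.card (Fin (n / t + 1) × {o : Fin k → Fin t // StrictMono o}) := by
    apply Nat.card_le_card_of_injective
      (f := fun p => (⟨(p.val i0).val / t,
          Nat.lt_succ_of_le (Nat.div_le_div_right (p.val i0).isLt.le)⟩,
        ⟨fun i => ⟨(p.val i).val % t, Nat.mod_lt _ ht⟩, hmonoOff p⟩))
    intro p q hpq
    rw [Prod.ext_iff] at hpq
    obtain ⟨hB', hoff'⟩ := hpq
    have hB : (p.val i0).val / t = (q.val i0).val / t := congrArg Fin.val hB'
    have hoff : ∀ i, (p.val i).val % t = (q.val i).val % t := fun i =>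
      congrArg Fin.val (congrFun (congrArg Subtype.val hoff') i)
    apply Subtype.ext
    funext i
    have hoffi := hoff i
    have hxi := hblock p.val p.prop.1 p.prop.2 i
    have hyi := hblock q.val q.prop.1 q.prop.2 i
    have hdmx := Nat.div_add_mod (p.val i).val t
    have hdmy := Nat.div_add_mod (q.val i).val t
    have h1 : t * ((p.val i).val / t) = t * ((q.val i).val / t) := by rw [hxi, hyi, hB]
    apply Fin.ext
    rw [← hdmx, ← hdmy, h1, hoffi]
  simpa [Nat.card_prod, Nat.card_eq_fintype_card] using key

lemma pow_succ_le_exp (t : ℕ) : ((t : ℝ) + 1) ^ t ≤ (t : ℝ) ^ t * Real.exp 1 := by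
  rcases Nat.eq_zero_or_pos t with h | h
  · subst h; simpa using Real.one_le_exp zero_le_one
  · have ht : (0 : ℝ) < t := Nat.cast_pos.mpr h
    have h1 : ((t : ℝ) + 1) = t * (1 + 1 / t) := by field_simp
    have h2 : (1 + 1 / (t : ℝ)) ^ t ≤ Real.exp (1 / (t : ℝ)) ^ t := by
      apply pow_le_pow_left₀ (by positivity)
      linarith [Real.add_one_le_exp (1 / (t : ℝ))]
    have h3 : Real.exp (1 / (t : ℝ)) ^ t = Real.exp ((t : ℝ) * (1 / (t : ℝ))) := by
      rw [← Real.exp_nat_mul]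
    have h4 : (t : ℝ) * (1 / (t : ℝ)) = 1 := by field_simp
    rw [h4] at h3
    rw [h3] at h2
    rw [h1, mul_pow]
    exact mul_le_mul_of_nonneg_left h2 (by positivity)

lemma exp_pow_le_factorial (t : ℕ) : ((t : ℝ) / Real.exp 1) ^ t ≤ (t.factorial : ℝ) := by
  induction t with
  | zero => simp
  | succ t ih =>
    have he : (0 : ℝ) < Real.exp 1 := Real.exp_pos 1
    have hepow : (0 : ℝ) < Real.exp 1 ^ t := by positivity
    have hkey : (((t : ℝ) + 1) / Real.exp 1) ^ t ≤ Real.exp 1 * ((t : ℝ) / Real.exp 1) ^ t := by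
      calc (((t : ℝ) + 1) / Real.exp 1) ^ t = ((t : ℝ) + 1) ^ t / Real.exp 1 ^ t := div_pow _ _ _
        _ ≤ ((t : ℝ) ^ t * Real.exp 1) / Real.exp 1 ^ t :=
            (div_le_div_iff_of_pos_right hepow).mpr (pow_succ_le_exp t)
        _ = Real.exp 1 * ((t : ℝ) ^ t / Real.exp 1 ^ t) := by ring
        _ = Real.exp 1 * ((t : ℝ) / Real.exp 1) ^ t := by rw [div_pow]
    have hih : Real.exp 1 * ((t : ℝ) / Real.exp 1) ^ t ≤ Real.exp 1 * (t.factorial : ℝ) :=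
      mul_le_mul_of_nonneg_left ih he.le
    calc (((t + 1 : ℕ) : ℝ) / Real.exp 1) ^ (t + 1)
        = (((t : ℝ) + 1) / Real.exp 1) * ((((t : ℝ) + 1) / Real.exp 1)) ^ t := by
          push_cast; rw [pow_succ]; ring
      _ ≤ (((t : ℝ) + 1) / Real.exp 1) * (Real.exp 1 * (t.factorial : ℝ)) := by
          apply mul_le_mul_of_nonneg_left (hkey.trans hih) (by positivity)
      _ = ((t : ℝ) + 1) * (t.factorial : ℝ) := by field_simp
      _ = (((t + 1).factorial : ℕ) : ℝ) := by rw [Nat.factorial_succ]; push_cast; ring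

lemma pow_exp_le_pow_self (r t : ℕ) : (t : ℝ) ^ r * Real.exp (-(t : ℝ)) ≤ (r : ℝ) ^ r := by
  rcases Nat.eq_zero_or_pos r with h | h
  · subst h; simpa using Real.exp_le_one_iff.mpr (by positivity)
  · rcases Nat.eq_zero_or_pos t with h0 | h0
    · subst h0
      simp only [Nat.cast_zero]
      rw [zero_pow (by omega), zero_mul]
      positivity
    have hrp : (0 : ℝ) < r := Nat.cast_pos.mpr h
    have htp : (0 : ℝ) < t := Nat.cast_pos.mpr h0
    have hlog : (r : ℝ) * Real.log ((t : ℝ) / (r : ℝ)) ≤ (t : ℝ) := by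
      have h1 : Real.log ((t : ℝ) / (r : ℝ)) ≤ (t : ℝ) / (r : ℝ) - 1 :=
        Real.log_le_sub_one_of_pos (by positivity)
      have h2 : (r : ℝ) * ((t : ℝ) / (r : ℝ) - 1) = (t : ℝ) - r := by field_simp
      nlinarith
    have key : ((t : ℝ) / (r : ℝ)) ^ r ≤ Real.exp (t : ℝ) := by
      rw [← Real.exp_log (x := ((t : ℝ) / (r : ℝ)) ^ r) (by positivity), Real.log_pow]
      exact Real.exp_le_exp.mpr hlog
    have key2 : (t : ℝ) ^ r ≤ (r : ℝ) ^ r * Real.exp (t : ℝ) := by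
      have := mul_le_mul_of_nonneg_left key (le_of_lt (pow_pos hrp r))
      rw [div_pow] at this
      calc (t : ℝ) ^ r = (r : ℝ) ^ r * ((t : ℝ) ^ r / (r : ℝ) ^ r) := by field_simp
        _ ≤ (r : ℝ) ^ r * Real.exp (t : ℝ) := this
    rw [Real.exp_neg]
    rw [mul_inv_le_iff₀ (Real.exp_pos _)]
    linarith [key2]

lemma main_construction {k : ℕ} (hk : 1 < k) (π : Equiv.Perm (Fin k)) (hπ : ¬SumDecomp π)
    (m n : ℕ) (hm : 0 < m) (hn : 0 < n) (hmn : m ≤ Nat.choose n k) :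
    Real.exp (-(5 : ℝ) * n) * max 1 (((m : ℝ) / (n : ℝ)) ^ ((n : ℝ) / ((k : ℝ) - 1))) ≤
      (Nat.card {σ : Equiv.Perm (Fin n) // permCopies π σ ≤ m} : ℝ) := by
  have hk0 : 0 < k := by omega
  have hkR : (1 : ℝ) ≤ (k : ℝ) - 1 := by
    have : (2 : ℝ) ≤ k := by exact_mod_cast hk
    linarith
  have hkR0 : (0 : ℝ) < (k : ℝ) - 1 := by linarith
  have hnR : (0 : ℝ) < n := Nat.cast_pos.mpr hn
  have hmnn : (0 : ℝ) ≤ (m : ℝ) / n := by positivity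
  set s : ℝ := ((m : ℝ) / n) ^ ((1 : ℝ) / ((k : ℝ) - 1)) with hs_def
  have hs0 : 0 ≤ s := Real.rpow_nonneg hmnn _
  have hsk : s ^ ((k : ℝ) - 1) = (m : ℝ) / n := by
    rw [hs_def, ← Real.rpow_mul hmnn, one_div_mul_cancel (ne_of_gt hkR0), Real.rpow_one]
  have hs_le_n : s ≤ (n : ℝ) := by
    have hmk : (m : ℝ) ≤ (n : ℝ) ^ (k : ℕ) := by
      exact_mod_cast hmn.trans (Nat.choose_le_pow n k)
    have hnk : (n : ℝ) ^ (k : ℕ) = (n : ℝ) ^ ((k : ℝ) - 1) * n := by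
      rw [← Real.rpow_natCast (n : ℝ) k, show ((k : ℕ) : ℝ) = ((k : ℝ) - 1) + 1 by ring,
        Real.rpow_add hnR, Real.rpow_one]
      norm_num
    have hdiv : (m : ℝ) / n ≤ (n : ℝ) ^ ((k : ℝ) - 1) := by
      rw [div_le_iff₀ hnR, ← hnk]
      exact hmk
    have h1 : s ≤ ((n : ℝ) ^ ((k : ℝ) - 1)) ^ ((1 : ℝ) / ((k : ℝ) - 1)) :=
      Real.rpow_le_rpow hmnn hdiv (by positivity)
    have h2 : ((n : ℝ) ^ ((k : ℝ) - 1)) ^ ((1 : ℝ) / ((k : ℝ) - 1)) = n := by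
      rw [← Real.rpow_mul hnR.le, mul_one_div_cancel (ne_of_gt hkR0), Real.rpow_one]
    rwa [h2] at h1
  set T : ℕ := max 1 (Nat.floor (s / 4)) with hT_def
  have hT1 : 1 ≤ T := le_max_left _ _
  have hTpos : 0 < T := hT1
  have hTR1 : (1 : ℝ) ≤ T := by exact_mod_cast hT1
  have hT8 : s / 8 ≤ T := by
    by_cases h8 : s ≤ 8
    · linarith
    · push_neg at h8
      have hf : s / 4 - 1 < Nat.floor (s / 4) := Nat.sub_one_lt_floor _
      have hTf : (Nat.floor (s / 4) : ℝ) ≤ T := by exact_mod_cast le_max_right 1 _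
      linarith
  have hT4 : 2 ≤ T → (T : ℝ) ≤ s / 4 := by
    intro h2
    have hfl : Nat.floor (s / 4) = T := by
      rcases le_total (Nat.floor (s / 4)) 1 with h | h
      · have : T = 1 := by rw [hT_def]; omega
        omega
      · rw [hT_def]; omega
    rw [← hfl]
    exact Nat.floor_le (by positivity)
  have hTnR : (T : ℝ) ≤ (n : ℝ) := by
    rcases le_or_gt 2 T with h2 | h2
    · have := hT4 h2
      linarith
    · have hT1' : T = 1 := by omega
      rw [hT1']
      exact_mod_cast hn
  have hTn : T ≤ n := by exact_mod_cast hTnR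
  -- every block-preserving permutation has at most m copies of π
  have hcopies : ∀ σ : Equiv.Perm (Fin n), (∀ u : Fin n, (σ u).val / T = u.val / T) →
      permCopies π σ ≤ m := by
    intro σ hσ
    have h1 := copies_le hTpos hk0 π hπ σ hσ
    by_cases hTk : T < k
    · have hempty : IsEmpty {o : Fin k → Fin T // StrictMono o} := by
        constructor
        rintro ⟨o, ho⟩
        have := Fintype.card_le_of_injective o ho.injective
        simp only [Fintype.card_fin] at this
        omega
      rw [Nat.card_of_isEmpty, mul_zero] at h1
      omega
    · push_neg at hTk
      have hcard : Nat.card {o : Fin k → Fin T // StrictMono o} ≤ T ^ k := by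
        calc Nat.card {o : Fin k → Fin T // StrictMono o}
            ≤ Nat.card (Fin k → Fin T) := Nat.card_le_card_of_injective _ Subtype.val_injective
          _ = T ^ k := by
              simp [Nat.card_fun, Nat.card_eq_fintype_card, Fintype.card_fin]
      have h2 : permCopies π σ ≤ (n / T + 1) * T ^ k :=
        h1.trans (Nat.mul_le_mul_left _ hcard)
      have hT2 : 2 ≤ T := by omega
      have hts4 : (T : ℝ) ≤ s / 4 := hT4 hT2
      have hTRpos : (0 : ℝ) < T := by exact_mod_cast hTpos
      have hq : ((n / T + 1 : ℕ) : ℝ) ≤ 2 * n / T := by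
        push_cast
        have q1 : ((n / T : ℕ) : ℝ) ≤ (n : ℝ) / T := Nat.cast_div_le
        have q2 : (1 : ℝ) ≤ (n : ℝ) / T := (one_le_div hTRpos).mpr hTnR
        have q3 : 2 * (n : ℝ) / T = (n : ℝ) / T + (n : ℝ) / T := by ring
        linarith
      have hTpow : (T : ℝ) ^ (k : ℕ) = (T : ℝ) ^ (k - 1 : ℕ) * T := by
        conv_lhs => rw [show k = (k - 1) + 1 by omega]
        rw [pow_succ]
      have hTk1 : (T : ℝ) ^ (k - 1 : ℕ) ≤ (s / 4) ^ (k - 1 : ℕ) :=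
        pow_le_pow_left₀ (by positivity) hts4 _
      have hs4 : (s / 4) ^ (k - 1 : ℕ) ≤ s ^ (k - 1 : ℕ) / 4 := by
        rw [div_pow]
        apply div_le_div_of_nonneg_left (by positivity) (by norm_num)
        calc (4 : ℝ) = 4 ^ 1 := (pow_one 4).symm
          _ ≤ 4 ^ (k - 1 : ℕ) := pow_le_pow_right₀ (by norm_num) (by omega)
      have hsk1 : s ^ (k - 1 : ℕ) = (m : ℝ) / n := by
        rw [← hsk, ← Real.rpow_natCast s (k - 1)]
        congr 1
        push_cast [Nat.cast_sub hk0]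
        ring
      have hreal : (((n / T + 1) * T ^ k : ℕ) : ℝ) ≤ (m : ℝ) := by
        push_cast
        calc (((n / T : ℕ) : ℝ) + 1) * (T : ℝ) ^ k
            ≤ (2 * n / T) * ((T : ℝ) ^ (k - 1 : ℕ) * T) := by
              rw [← hTpow]
              apply mul_le_mul ?_ le_rfl (by positivity) (by positivity)
              have := hq
              push_cast at this
              exact this
          _ = 2 * (n : ℝ) * (T : ℝ) ^ (k - 1 : ℕ) := by field_simp
          _ ≤ 2 * (n : ℝ) * (s ^ (k - 1 : ℕ) / 4) := by
              apply mul_le_mul_of_nonneg_left (hTk1.trans hs4) (by positivity)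
          _ = (n : ℝ) * s ^ (k - 1 : ℕ) / 2 := by ring
          _ = (n : ℝ) * ((m : ℝ) / n) / 2 := by rw [hsk1]
          _ = (m : ℝ) / 2 := by field_simp
          _ ≤ (m : ℝ) := by
              have : (0 : ℝ) ≤ m := by positivity
              linarith
      refine h2.trans ?_
      exact_mod_cast hreal
  -- lower bound for the count
  have hcount := card_lower hTpos (fun σ => permCopies π σ ≤ m) hcopies
  set Q := n / T with hQdef
  set R := n % T with hRdef
  have hQR : T * Q + R = n := Nat.div_add_mod n T
  have hRT : R < T := Nat.mod_lt n hTpos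
  have he1 : (0 : ℝ) < Real.exp 1 := Real.exp_pos 1
  have hstep1 : ((T.factorial ^ Q * R.factorial : ℕ) : ℝ) ≥
      (((T : ℝ) / Real.exp 1) ^ T) ^ Q * ((R : ℝ) / Real.exp 1) ^ R := by
    push_cast
    exact mul_le_mul (pow_le_pow_left₀ (by positivity) (exp_pow_le_factorial T) Q)
      (exp_pow_le_factorial R) (by positivity) (by positivity)
  have hstep2 : (((T : ℝ) / Real.exp 1) ^ T) ^ Q * ((R : ℝ) / Real.exp 1) ^ R =
      Real.exp (-(n : ℝ)) * ((T : ℝ) ^ (T * Q) * (R : ℝ) ^ R) := by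
    rw [← pow_mul, div_pow, div_pow, div_mul_div_comm, ← pow_add, Real.exp_one_pow, hQR,
      Real.exp_neg]
    rw [div_eq_inv_mul]
  have hstep3 : (T : ℝ) ^ R * Real.exp (-(T : ℝ)) ≤ (R : ℝ) ^ R := pow_exp_le_pow_self R T
  have hexpTn : Real.exp (-(n : ℝ)) ≤ Real.exp (-(T : ℝ)) := by
    apply Real.exp_le_exp.mpr
    linarith
  have hbig : Real.exp (-(2 : ℝ) * n) * (T : ℝ) ^ n ≤
      ((T.factorial ^ Q * R.factorial : ℕ) : ℝ) := by
    have he2 : Real.exp (-(2 : ℝ) * n) = Real.exp (-(n : ℝ)) * Real.exp (-(n : ℝ)) := by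
      rw [← Real.exp_add]
      ring_nf
    have e1 : Real.exp (-(2 : ℝ) * n) * (T : ℝ) ^ n =
        Real.exp (-(n : ℝ)) * ((T : ℝ) ^ (T * Q) * ((T : ℝ) ^ R * Real.exp (-(n : ℝ)))) := by
      rw [he2, show (T : ℝ) ^ n = (T : ℝ) ^ (T * Q) * (T : ℝ) ^ R by rw [← pow_add, hQR]]
      ring
    rw [e1]
    refine le_trans ?_ (hstep2 ▸ hstep1)
    apply mul_le_mul_of_nonneg_left ?_ (Real.exp_pos _).le
    apply mul_le_mul_of_nonneg_left ?_ (by positivity)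
    exact le_trans (mul_le_mul_of_nonneg_left hexpTn (by positivity)) hstep3
  -- relating the max term to s and T
  have hX : ((m : ℝ) / n) ^ ((n : ℝ) / ((k : ℝ) - 1)) = s ^ (n : ℕ) := by
    rw [hs_def, ← Real.rpow_natCast (((m : ℝ) / n) ^ ((1 : ℝ) / ((k : ℝ) - 1))) n,
      ← Real.rpow_mul hmnn]
    congr 1
    field_simp
  have hmax : max 1 (s ^ (n : ℕ)) ≤ (8 : ℝ) ^ n * (T : ℝ) ^ n := by
    apply max_le
    · have h1 : (1 : ℝ) ≤ (T : ℝ) ^ n := one_le_pow₀ hTR1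
      have h2 : (1 : ℝ) ≤ (8 : ℝ) ^ n := one_le_pow₀ (by norm_num)
      nlinarith
    · have h2 : s ^ (n : ℕ) = (8 : ℝ) ^ n * (s / 8) ^ n := by
        rw [← mul_pow]
        congr 1
        field_simp
      rw [h2]
      exact mul_le_mul_of_nonneg_left (pow_le_pow_left₀ (by positivity) hT8 n) (by positivity)
  have h8 : (8 : ℝ) ^ n ≤ Real.exp (3 * (n : ℝ)) := by
    have h2e : (2 : ℝ) ≤ Real.exp 1 := by linarith [Real.add_one_le_exp 1]
    have h83 : (8 : ℝ) ≤ Real.exp 3 := by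
      have h3 : Real.exp 1 ^ (3 : ℕ) = Real.exp 3 := by
        rw [← Real.exp_one_rpow 3, ← Real.rpow_natCast (Real.exp 1) 3]
        norm_num
      calc (8 : ℝ) = 2 ^ (3 : ℕ) := by norm_num
        _ ≤ Real.exp 1 ^ (3 : ℕ) := pow_le_pow_left₀ (by norm_num) h2e 3
        _ = Real.exp 3 := h3
    calc (8 : ℝ) ^ n ≤ (Real.exp 3) ^ n := pow_le_pow_left₀ (by norm_num) h83 n
      _ = Real.exp (3 * n) := by
          rw [← Real.exp_one_rpow 3, ← Real.rpow_natCast (Real.exp 1 ^ (3:ℝ)) n,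
            ← Real.rpow_mul (Real.exp_pos 1).le, Real.exp_one_rpow]
  -- final chain
  have hcountR : ((T.factorial ^ Q * R.factorial : ℕ) : ℝ) ≤
      (Nat.card {σ : Equiv.Perm (Fin n) // permCopies π σ ≤ m} : ℝ) := by
    exact_mod_cast hcount
  calc Real.exp (-(5 : ℝ) * n) * max 1 (((m : ℝ) / n) ^ ((n : ℝ) / ((k : ℝ) - 1)))
      = Real.exp (-(5 : ℝ) * n) * max 1 (s ^ (n : ℕ)) := by rw [hX]
    _ ≤ Real.exp (-(5 : ℝ) * n) * ((8 : ℝ) ^ n * (T : ℝ) ^ n) :=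
        mul_le_mul_of_nonneg_left hmax (Real.exp_pos _).le
    _ ≤ Real.exp (-(5 : ℝ) * n) * (Real.exp (3 * (n : ℝ)) * (T : ℝ) ^ n) := by
        apply mul_le_mul_of_nonneg_left ?_ (Real.exp_pos _).le
        exact mul_le_mul_of_nonneg_right h8 (by positivity)
    _ = Real.exp (-(2 : ℝ) * n) * (T : ℝ) ^ n := by
        rw [← mul_assoc, ← Real.exp_add]
        ring_nf
    _ ≤ ((T.factorial ^ Q * R.factorial : ℕ) : ℝ) := hbig
    _ ≤ _ := hcountR

end Aux


/-- The number of `n`-permutations with at most `m ≤ C(n,k)` copies of `π` is at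
least `exp(-Cn) · max(1, (m/n)^(n/(k-1)))`: the upper bound is sharp to within
an exponential factor. -/
theorem count_permutations_few_copies_sharp (k : ℕ) (hk : 1 < k)
    (π : Equiv.Perm (Fin k)) :
    ∃ C : ℝ, ∀ m n : ℕ, 0 < m → 0 < n → m ≤ Nat.choose n k →
      Real.exp (-C * n) *
          max 1 (((m : ℝ) / (n : ℝ)) ^ ((n : ℝ) / ((k : ℝ) - 1))) ≤
        (Nat.card {σ : Equiv.Perm (Fin n) // permCopies π σ ≤ m} : ℝ) := by
  refine ⟨5, fun m n hm hn hmn => ?_⟩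
  rcases not_sumDecomp_or hk π with hπ | hπ
  · simpa using main_construction hk π hπ m n hm hn hmn
  · have hmain := main_construction hk (π.trans Fin.revPerm) hπ m n hm hn hmn
    have htrr : ∀ τ : Equiv.Perm (Fin n), (τ.trans Fin.revPerm).trans Fin.revPerm = τ := by
      intro τ
      apply Equiv.ext
      intro u
      simp [Equiv.trans_apply, Fin.rev_rev]
    have e : {σ : Equiv.Perm (Fin n) // permCopies (π.trans Fin.revPerm) σ ≤ m} ≃
        {σ : Equiv.Perm (Fin n) // permCopies π σ ≤ m} :=
      { toFun := fun p => ⟨p.val.trans Fin.revPerm, by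
          have h := permCopies_rev π (p.val.trans Fin.revPerm)
          rw [htrr p.val] at h
          rw [← h]
          exact p.prop⟩
        invFun := fun p => ⟨p.val.trans Fin.revPerm, by
          rw [permCopies_rev π p.val]
          exact p.prop⟩
        left_inv := fun p => Subtype.ext (htrr p.val)
        right_inv := fun p => Subtype.ext (htrr p.val) }
    have hcardeq : Nat.card {σ : Equiv.Perm (Fin n) // permCopies π σ ≤ m} =
        Nat.card {σ : Equiv.Perm (Fin n) // permCopies (π.trans Fin.revPerm) σ ≤ m} :=
      (Nat.card_congr e).symm
    rw [hcardeq]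
    simpa using hmain
end

section
/- Let k ≥ 2, π a permutation of {1,...,k}, n a positive integer, and b ≥ 1 a real number; set n' = ⌈n/b⌉. For a permutation σ of {1,...,n}, let B_σ be the n'×n' 0-1 matrix (the b-contraction of the permutation matrix A_σ) with B_σ[i][j] = 1 iff there exist i', j' with ⌈i'/b⌉ = i, ⌈j'/b⌉ = j and σ(i') = j'. Then for any fixed n'×n' 0-1 matrix B, the number of permutations σ of {1,...,n} with B_σ = B is at most ⌈b⌉^(2n). -/
/-!
Let `f` send an index to its block. If `B` is the contraction of `σ`, then `σ x` lies in a
column block `j` with `B (f x) j`; there are at most `⌈b⌉` such `j`, one for each row of the row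
block of `x`, and each block has at most `⌈b⌉` elements. So every `σ` in the fiber of `B` is a
choice function from a product of `n` sets, each of size at most `⌈b⌉ ^ 2`, fixed by `B`.
-/

open Finset

section Contraction

variable {α β : Type*} [Fintype α] [DecidableEq α] [DecidableEq β]

/-- `B` is the contraction of the permutation matrix of `σ` along the block map `f`. -/
def IsContraction (f : α → β) (σ : Equiv.Perm α) (B : β → β → Bool) : Prop :=
  ∀ i j, B i j = true ↔ ∃ x, f x = i ∧ f (σ x) = j

lemma IsContraction.card_filter_le {f : α → β} {σ : Equiv.Perm α} {B : β → β → Bool}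
    (hσ : IsContraction f σ B) {c : ℕ} (hf : ∀ y, #{x | f x = y} ≤ c) (x : α) :
    #{m | B (f x) (f m) = true} ≤ c ^ 2 := by
  have hsub : ({m | B (f x) (f m) = true} : Finset α) ⊆
      ({x' | f x' = f x} : Finset α).biUnion fun x' => {m | f m = f (σ x')} := by
    intro m hm
    obtain ⟨x', hx', hm'⟩ := (hσ _ _).1 (mem_filter.1 hm).2
    exact mem_biUnion.2 ⟨x', by simpa using hx', by simpa using hm'.symm⟩
  calc #{m | B (f x) (f m) = true}
      ≤ #({x' | f x' = f x} : Finset α) * c :=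
        (card_le_card hsub).trans (card_biUnion_le_card_mul _ _ _ fun x' _ => hf _)
    _ ≤ c ^ 2 := by rw [sq]; exact Nat.mul_le_mul_right _ (hf _)

theorem card_isContraction_le (f : α → β) (B : β → β → Bool) {c : ℕ}
    (hf : ∀ y, #{x | f x = y} ≤ c) :
    Nat.card {σ : Equiv.Perm α // IsContraction f σ B} ≤ c ^ (2 * Fintype.card α) := by
  rcases isEmpty_or_nonempty {σ : Equiv.Perm α // IsContraction f σ B} with _ | ⟨σ₀, hσ₀⟩
  · simp
  let S : α → Finset α := fun x => {m | B (f x) (f m) = true}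
  have hmaps : ∀ σ : {σ : Equiv.Perm α // IsContraction f σ B},
      ⇑σ.1 ∈ Fintype.piFinset S := fun ⟨σ, hσ⟩ =>
    Fintype.mem_piFinset.2 fun x => mem_filter.2 ⟨mem_univ _, (hσ _ _).2 ⟨x, rfl, rfl⟩⟩
  calc Nat.card {σ : Equiv.Perm α // IsContraction f σ B}
      ≤ Nat.card (Fintype.piFinset S) :=
        Nat.card_le_card_of_injective (fun σ => ⟨σ.1, hmaps σ⟩) fun σ τ h =>
          Subtype.ext (Equiv.coe_fn_injective (congrArg Subtype.val h))
    _ = ∏ x, #(S x) := by rw [Nat.card_eq_fintype_card, Fintype.card_coe, Fintype.card_piFinset]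
    _ ≤ ∏ _x : α, c ^ 2 := prod_le_prod' fun x _ => hσ₀.card_filter_le hf x
    _ = c ^ (2 * Fintype.card α) := by rw [prod_const, card_univ, pow_mul]

end Contraction

lemma Nat.floor_add_sub_floor_le {x b : ℝ} (hx : 0 ≤ x) :
    ⌊x + b⌋₊ - ⌊x⌋₊ ≤ ⌈b⌉₊ := by
  have : ⌊x + b⌋₊ ≤ ⌊x⌋₊ + ⌈b⌉₊ := by
    rw [← Nat.floor_add_natCast hx]
    exact Nat.floor_le_floor (by linarith [Nat.le_ceil b])
  omega

lemma one_le_ceil_succ_div {b : ℝ} (hb : 1 ≤ b) (m : ℕ) : 1 ≤ ⌈((m : ℝ) + 1) / b⌉₊ :=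
  Nat.one_le_ceil_iff.2 (div_pos (by positivity) (by linarith))

section Blocks

variable {b : ℝ} (hb : 1 ≤ b) {n : ℕ}

/-- The 0-based index of the length-`b` block containing the 0-based index `m`. -/
noncomputable def block (m : Fin n) : Fin ⌈(n : ℝ) / b⌉₊ :=
  ⟨⌈((m : ℝ) + 1) / b⌉₊ - 1, by
    have hle : ⌈((m : ℝ) + 1) / b⌉₊ ≤ ⌈(n : ℝ) / b⌉₊ :=
      Nat.ceil_le_ceil (div_le_div_of_nonneg_right (by exact_mod_cast m.isLt) (by linarith))
    have := one_le_ceil_succ_div hb m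
    omega⟩

lemma ceil_succ_div_eq_iff (m : Fin n) (c : ℕ) :
    ⌈((m : ℝ) + 1) / b⌉₊ = c + 1 ↔ (block hb m : ℕ) = c := by
  have := one_le_ceil_succ_div hb m
  simp only [block]
  omega

lemma card_block_eq_le (y : Fin ⌈(n : ℝ) / b⌉₊) : #{m | block hb m = y} ≤ ⌈b⌉₊ := by
  have hb0 : 0 < b := by linarith
  have hy : 0 ≤ (y : ℝ) * b := by positivity
  calc #{m | block hb m = y}
      ≤ #(Ioc ⌊(y : ℝ) * b⌋₊ ⌊(y : ℝ) * b + b⌋₊) := by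
        refine card_le_card_of_injOn (fun m => (m : ℕ) + 1) (fun m hm => ?_) ?_
        · have hm := (ceil_succ_div_eq_iff hb m y).2 (congrArg Fin.val (mem_filter.1 hm).2)
          rw [Nat.ceil_eq_iff (Nat.succ_ne_zero _), lt_div_iff₀ hb0, div_le_iff₀ hb0] at hm
          push_cast at hm
          simp only [coe_Ioc, Set.mem_Ioc]
          exact ⟨(Nat.floor_lt hy).2 (by push_cast; linarith),
            Nat.le_floor (by push_cast; linarith)⟩
        · intro m₁ _ m₂ _ h
          exact Fin.ext (Nat.succ_injective h)
    _ ≤ ⌈b⌉₊ := by rw [Nat.card_Ioc]; exact Nat.floor_add_sub_floor_le hy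

end Blocks

theorem contraction_fiber_count_general (n : ℕ) (b : ℝ) (hb : 1 ≤ b)
    (B : Fin ⌈(n : ℝ) / b⌉₊ → Fin ⌈(n : ℝ) / b⌉₊ → Bool) :
    Nat.card {σ : Equiv.Perm (Fin n) //
      ∀ i j, (B i j = true ↔ ∃ i' : Fin n,
        ⌈(((i' : ℕ) + 1 : ℕ) : ℝ) / b⌉₊ = (i : ℕ) + 1 ∧
        ⌈(((σ i' : Fin n) : ℕ) + 1 : ℝ) / b⌉₊ = (j : ℕ) + 1)} ≤
      ⌈b⌉₊ ^ (2 * n) := by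
  have hfiber : ∀ σ : Equiv.Perm (Fin n), (∀ i j, (B i j = true ↔ ∃ i' : Fin n,
        ⌈(((i' : ℕ) + 1 : ℕ) : ℝ) / b⌉₊ = (i : ℕ) + 1 ∧
        ⌈(((σ i' : Fin n) : ℕ) + 1 : ℝ) / b⌉₊ = (j : ℕ) + 1)) ↔
      IsContraction (block hb) σ B := fun σ => by
    simp only [IsContraction, Nat.cast_succ, ceil_succ_div_eq_iff hb, Fin.val_inj]
  calc _ = Nat.card {σ // IsContraction (block hb) σ B} :=
        Nat.card_congr (Equiv.subtypeEquivRight hfiber)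
    _ ≤ ⌈b⌉₊ ^ (2 * Fintype.card (Fin n)) := card_isContraction_le _ B (card_block_eq_le hb)
    _ = ⌈b⌉₊ ^ (2 * n) := by rw [Fintype.card_fin]

/-- For a real `b ≥ 1` and a fixed `⌈n/b⌉ × ⌈n/b⌉` 0-1 matrix `B`, the number of
permutations `σ` of `{1,…,n}` whose permutation matrix `b`-contracts to `B`
(that is, `B i j = 1` iff some 1-entry `(i', σ(i'))` of `A_σ` satisfies
`⌈i'/b⌉ = i` and `⌈σ(i')/b⌉ = j`, stated here with 1-based indices) is at most
`⌈b⌉^(2n)`. -/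
theorem contraction_fiber_count (k n : ℕ) (hk : 2 ≤ k) (π : Equiv.Perm (Fin k))
    (hn : 0 < n) (b : ℝ) (hb : 1 ≤ b)
    (B : Fin ⌈(n : ℝ) / b⌉₊ → Fin ⌈(n : ℝ) / b⌉₊ → Bool) :
    Nat.card {σ : Equiv.Perm (Fin n) //
      ∀ i j, (B i j = true ↔ ∃ i' : Fin n,
        ⌈(((i' : ℕ) + 1 : ℕ) : ℝ) / b⌉₊ = (i : ℕ) + 1 ∧
        ⌈(((σ i' : Fin n) : ℕ) + 1 : ℝ) / b⌉₊ = (j : ℕ) + 1)} ≤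
      ⌈b⌉₊ ^ (2 * n) :=
  contraction_fiber_count_general n b hb B
end
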